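/- Let n, k be positive integers, ε ∈ ℝⁿ, Z a real n × k matrix with ZᵀD_ε²Z invertible, V := Z(ZᵀD_ε²Z)⁻¹Zᵀ, P := D_ε V D_ε, and let x̄, a ∈ ℝⁿ. Set Ψ := (I − P) D_a P and define the random variable S_r := −(1/n) x̄ᵀ V D_ε r − (1/n) rᵀ D_a P r + (1/n) rᵀ P D_a P r + (1/n) rᵀ P D_r D_{x̄} V D_ε r, where r is uniformly distributed on {−1,1}ⁿ. Then E[(rᵀPr − trace(P)) · (n · S_r)] = 2 · Σ_{i=1}^n P_{ii} Ψ_{ii}. In particular, with k := trace(P), the covariance between k^{−1/2}(rᵀPr − k) and √n · S_r equals (2/√(nk)) · tr(Ψ ∘ P). -/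
import Mathlib


open Matrix

/-- The ±1 sign vector associated to a Boolean vector. -/
noncomputable def signVec {m : ℕ} (s : Fin m → Bool) : Fin m → ℝ :=
  fun i => if s i then 1 else -1

/-- `V = Z (Zᵀ D_ε² Z)⁻¹ Zᵀ`. -/
noncomputable def Vmat {n k : ℕ} (ε : Fin n → ℝ) (Z : Matrix (Fin n) (Fin k) ℝ) :
    Matrix (Fin n) (Fin n) ℝ :=
  Z * (Zᵀ * Matrix.diagonal (fun i => ε i ^ 2) * Z)⁻¹ * Zᵀ

/-- `P = D_ε V D_ε`. -/
noncomputable def Pmat {n k : ℕ} (ε : Fin n → ℝ) (Z : Matrix (Fin n) (Fin k) ℝ) :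
    Matrix (Fin n) (Fin n) ℝ :=
  Matrix.diagonal ε * Vmat ε Z * Matrix.diagonal ε

/-- The sign-randomized score `S_{l,r}(β₀)` of the CU objective (equation (6) of the paper). -/
noncomputable def scoreR {n k : ℕ} (ε : Fin n → ℝ) (Z : Matrix (Fin n) (Fin k) ℝ)
    (xbar a : Fin n → ℝ) (s : Fin n → Bool) : ℝ :=
  -(1 / (n : ℝ)) * (xbar ⬝ᵥ (Vmat ε Z * Matrix.diagonal ε).mulVec (signVec s))
    - (1 / (n : ℝ)) * (signVec s ⬝ᵥ (Matrix.diagonal a * Pmat ε Z).mulVec (signVec s))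
    + (1 / (n : ℝ)) *
        (signVec s ⬝ᵥ (Pmat ε Z * Matrix.diagonal a * Pmat ε Z).mulVec (signVec s))
    + (1 / (n : ℝ)) *
        (signVec s ⬝ᵥ (Pmat ε Z * Matrix.diagonal (signVec s) * Matrix.diagonal xbar *
            Vmat ε Z * Matrix.diagonal ε).mulVec (signVec s))


/-- `Ψ = (I − P) D_a P`. -/
noncomputable def PsiMat {n k : ℕ} (ε : Fin n → ℝ) (Z : Matrix (Fin n) (Fin k) ℝ)
    (a : Fin n → ℝ) : Matrix (Fin n) (Fin n) ℝ :=
  (1 - Pmat ε Z) * Matrix.diagonal a * Pmat ε Z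

section Aux

variable {n : ℕ}

private lemma signVec_mul_self (s : Fin n → Bool) (i : Fin n) :
    signVec s i * signVec s i = 1 := by
  simp only [signVec]; cases s i <;> norm_num

private lemma signVec_not (s : Fin n → Bool) : signVec (fun i => !(s i)) = -signVec s := by
  funext i; cases h : s i <;> simp [signVec, h]

private lemma signVec_update_noteq (s : Fin n → Bool) (i j : Fin n) (b : Bool) (h : j ≠ i) :
    signVec (Function.update s i b) j = signVec s j := by
  simp [signVec, Function.update_of_ne h]

private lemma sum_flipAll_zero (F : (Fin n → Bool) → ℝ)
    (hF : ∀ s, F (fun i => !(s i)) = -F s) : ∑ s : Fin n → Bool, F s = 0 := by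
  let e : (Fin n → Bool) ≃ (Fin n → Bool) :=
    ⟨fun s i => !(s i), fun s i => !(s i),
     fun s => by funext i; simp, fun s => by funext i; simp⟩
  have h1 : ∑ s, F (e s) = ∑ s, F s := Equiv.sum_comp e F
  have h2 : ∀ s : Fin n → Bool, F (e s) = -F s := fun s => hF s
  simp only [h2] at h1
  rw [Finset.sum_neg_distrib] at h1
  linarith

private lemma sum_flipCoord_zero (i : Fin n) (g : (Fin n → Bool) → ℝ)
    (hg : ∀ s, g (Function.update s i (!(s i))) = g s) :
    ∑ s : Fin n → Bool, signVec s i * g s = 0 := by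
  have hinv : ∀ s : Fin n → Bool,
      Function.update (Function.update s i (!(s i))) i
        (!(Function.update s i (!(s i)) i)) = s := by
    intro s; funext j
    by_cases h : j = i
    · subst h; simp
    · simp [Function.update_of_ne h]
  let e : (Fin n → Bool) ≃ (Fin n → Bool) :=
    ⟨fun s => Function.update s i (!(s i)), fun s => Function.update s i (!(s i)), hinv, hinv⟩
  have h1 : ∑ s, signVec (e s) i * g (e s) = ∑ s, signVec s i * g s :=
    Equiv.sum_comp e (fun s => signVec s i * g s)
  have h2 : ∀ s : Fin n → Bool, signVec (e s) i * g (e s) = -(signVec s i * g s) := by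
    intro s
    have hs : signVec (Function.update s i (!(s i))) i = -signVec s i := by
      simp only [signVec, Function.update_self]; cases s i <;> norm_num
    show signVec (Function.update s i (!(s i))) i * g (Function.update s i (!(s i)))
        = -(signVec s i * g s)
    rw [hs, hg]; ring
  simp only [h2] at h1
  rw [Finset.sum_neg_distrib] at h1
  linarith

private lemma moment2 (p q : Fin n) :
    ∑ s : Fin n → Bool, signVec s p * signVec s q = if p = q then (2:ℝ)^n else 0 := by
  by_cases h : p = q
  · subst h
    simp only [signVec_mul_self, if_pos rfl, Finset.sum_const, Finset.card_univ]
    simp [Fintype.card_fun]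
  · rw [if_neg h]
    exact sum_flipCoord_zero p (fun s => signVec s q)
      (fun s => signVec_update_noteq s p q _ (Ne.symm h))

private lemma moment4 (i j p q : Fin n) :
    ∑ s : Fin n → Bool, signVec s i * signVec s j * signVec s p * signVec s q
    = if (i = j ∧ p = q) ∨ (i = p ∧ j = q) ∨ (i = q ∧ j = p) then (2:ℝ)^n else 0 := by
  by_cases hij : i = j
  · subst hij
    have hred : ∀ s : Fin n → Bool,
        signVec s i * signVec s i * signVec s p * signVec s q = signVec s p * signVec s q := by
      intro s; rw [signVec_mul_self, one_mul]
    simp only [hred, moment2]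
    by_cases hpq : p = q
    · simp [hpq]
    · rw [if_neg hpq, if_neg (by
        rintro (⟨-, h⟩ | ⟨h1, h2⟩ | ⟨h1, h2⟩)
        · exact hpq h
        · exact hpq (h1 ▸ h2 ▸ rfl)
        · exact hpq (h2 ▸ h1 ▸ rfl))]
  · by_cases hip : i = p
    · subst hip
      have hred : ∀ s : Fin n → Bool,
          signVec s i * signVec s j * signVec s i * signVec s q = signVec s j * signVec s q := by
        intro s
        rw [show signVec s i * signVec s j * signVec s i * signVec s q
            = signVec s i * signVec s i * (signVec s j * signVec s q) by ring,
          signVec_mul_self, one_mul]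
      simp only [hred, moment2]
      by_cases hjq : j = q
      · subst hjq
        rw [if_pos rfl, if_pos (Or.inr (Or.inl ⟨trivial, rfl⟩))]
      · rw [if_neg hjq, if_neg (by
          rintro (⟨h1, h2⟩ | ⟨-, h⟩ | ⟨h1, h2⟩)
          · exact hij h1
          · exact hjq h
          · exact hij (h2 ▸ rfl))]
    · by_cases hiq : i = q
      · subst hiq
        have hred : ∀ s : Fin n → Bool,
            signVec s i * signVec s j * signVec s p * signVec s i = signVec s j * signVec s p := by
          intro s
          rw [show signVec s i * signVec s j * signVec s p * signVec s i
              = signVec s i * signVec s i * (signVec s j * signVec s p) by ring,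
            signVec_mul_self, one_mul]
        simp only [hred, moment2]
        by_cases hjp : j = p
        · subst hjp
          rw [if_pos rfl, if_pos (Or.inr (Or.inr ⟨trivial, rfl⟩))]
        · rw [if_neg hjp, if_neg (by
            rintro (⟨h1, h2⟩ | ⟨h1, h2⟩ | ⟨-, h⟩)
            · exact hij h1
            · exact hip h1
            · exact hjp h)]
      · have hc : ¬((i = j ∧ p = q) ∨ (i = p ∧ j = q) ∨ (i = q ∧ j = p)) := by
          rintro (⟨h, -⟩ | ⟨h, -⟩ | ⟨h, -⟩)
          · exact hij h
          · exact hip h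
          · exact hiq h
        rw [if_neg hc]
        have h0 : ∑ s : Fin n → Bool,
            signVec s i * (signVec s j * (signVec s p * signVec s q)) = 0 := by
          apply sum_flipCoord_zero i (fun s => signVec s j * (signVec s p * signVec s q))
          intro s
          rw [signVec_update_noteq s i j _ (fun h => hij h.symm),
            signVec_update_noteq s i p _ (fun h => hip h.symm),
            signVec_update_noteq s i q _ (fun h => hiq h.symm)]
        rw [← h0]
        exact Finset.sum_congr rfl fun s _ => by ring

private lemma diagonal_neg' (v : Fin n → ℝ) :
    Matrix.diagonal (-v) = -Matrix.diagonal v := by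
  ext i j
  by_cases h : i = j
  · subst h; simp [Matrix.diagonal_apply_eq]
  · simp [Matrix.diagonal_apply_ne _ h, h]

private lemma quadform_expand (X : Matrix (Fin n) (Fin n) ℝ) (s : Fin n → Bool) :
    signVec s ⬝ᵥ X.mulVec (signVec s)
    = ∑ i, ∑ j, signVec s i * X i j * signVec s j := by
  simp [dotProduct, Matrix.mulVec, Finset.mul_sum, mul_assoc, mul_comm, mul_left_comm]

private lemma quadform_avg (M : Matrix (Fin n) (Fin n) ℝ) :
    ∑ s : Fin n → Bool, signVec s ⬝ᵥ M.mulVec (signVec s) = 2^n * M.trace := by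
  simp only [quadform_expand]
  rw [Finset.sum_comm]
  have h1 : ∀ i : Fin n, ∑ s : Fin n → Bool, ∑ j, signVec s i * M i j * signVec s j
      = ∑ j, (if i = j then M i j * (2:ℝ)^n else 0) := by
    intro i
    rw [Finset.sum_comm]
    refine Finset.sum_congr rfl fun j _ => ?_
    have : ∑ s : Fin n → Bool, signVec s i * M i j * signVec s j
        = M i j * ∑ s : Fin n → Bool, signVec s i * signVec s j := by
      rw [Finset.mul_sum]; exact Finset.sum_congr rfl fun s _ => by ring
    rw [this, moment2, mul_ite, mul_zero]
  simp only [h1, Finset.sum_ite_eq, Finset.mem_univ, if_pos]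
  rw [Matrix.trace]
  simp only [Matrix.diag]
  rw [← Finset.sum_mul, mul_comm]

private lemma quart (P M : Matrix (Fin n) (Fin n) ℝ) :
    ∑ s : Fin n → Bool,
      (signVec s ⬝ᵥ P.mulVec (signVec s) - P.trace) * (signVec s ⬝ᵥ M.mulVec (signVec s))
    = 2^n * ∑ i, ∑ j, (if i = j then 0 else P i j * (M i j + M j i)) := by
  have h2 := quadform_avg M
  have hsplit : ∑ s : Fin n → Bool,
      (signVec s ⬝ᵥ P.mulVec (signVec s) - P.trace) * (signVec s ⬝ᵥ M.mulVec (signVec s))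
      = (∑ s : Fin n → Bool,
          (signVec s ⬝ᵥ P.mulVec (signVec s)) * (signVec s ⬝ᵥ M.mulVec (signVec s)))
        - P.trace * (2^n * M.trace) := by
    rw [← h2, Finset.mul_sum, ← Finset.sum_sub_distrib]
    exact Finset.sum_congr rfl fun s _ => by ring
  rw [hsplit]
  have hmain : ∑ s : Fin n → Bool,
      (signVec s ⬝ᵥ P.mulVec (signVec s)) * (signVec s ⬝ᵥ M.mulVec (signVec s))
      = ∑ i, ∑ j, ∑ p, ∑ q, P i j * M p q *
          (if (i = j ∧ p = q) ∨ (i = p ∧ j = q) ∨ (i = q ∧ j = p) then (2:ℝ)^n else 0) := by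
    simp only [quadform_expand]
    have hexp : ∀ s : Fin n → Bool,
        (∑ i, ∑ j, signVec s i * P i j * signVec s j) *
        (∑ p, ∑ q, signVec s p * M p q * signVec s q)
        = ∑ i, ∑ j, ∑ p, ∑ q,
            P i j * M p q * (signVec s i * signVec s j * signVec s p * signVec s q) := by
      intro s
      rw [Finset.sum_mul_sum]
      refine Finset.sum_congr rfl fun i _ => ?_
      have hp : ∀ p : Fin n,
          (∑ j, signVec s i * P i j * signVec s j) * (∑ q, signVec s p * M p q * signVec s q)
          = ∑ j, ∑ q, P i j * M p q *
              (signVec s i * signVec s j * signVec s p * signVec s q) := by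
        intro p
        rw [Finset.sum_mul_sum]
        refine Finset.sum_congr rfl fun j _ => ?_
        exact Finset.sum_congr rfl fun q _ => by ring
      simp only [hp]
      exact Finset.sum_comm
    simp only [hexp]
    rw [Finset.sum_comm]
    refine Finset.sum_congr rfl fun i _ => ?_
    rw [Finset.sum_comm]
    refine Finset.sum_congr rfl fun j _ => ?_
    rw [Finset.sum_comm]
    refine Finset.sum_congr rfl fun p _ => ?_
    rw [Finset.sum_comm]
    refine Finset.sum_congr rfl fun q _ => ?_
    rw [← moment4 i j p q, Finset.mul_sum]
  rw [hmain]
  have hcomb : ∀ i j : Fin n, (∑ p, ∑ q, P i j * M p q *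
      (if (i = j ∧ p = q) ∨ (i = p ∧ j = q) ∨ (i = q ∧ j = p) then (2:ℝ)^n else 0))
      = (if i = j then P i i * M.trace * 2^n else 0)
        + 2^n * (if i = j then 0 else P i j * (M i j + M j i)) := by
    intro i j
    by_cases hij : i = j
    · subst hij
      rw [if_pos rfl, if_pos rfl, mul_zero, add_zero]
      have hterm : ∀ p q : Fin n, P i i * M p q *
          (if (i = i ∧ p = q) ∨ (i = p ∧ i = q) ∨ (i = q ∧ i = p) then (2:ℝ)^n else 0)
          = if p = q then P i i * M p q * 2^n else 0 := by
        intro p q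
        by_cases h : p = q
        · rw [if_pos h, if_pos (Or.inl ⟨rfl, h⟩)]
        · rw [if_neg h, if_neg, mul_zero]
          rintro (⟨-, hh⟩ | ⟨h1, hh⟩ | ⟨h1, hh⟩)
          · exact h hh
          · exact h (h1 ▸ hh ▸ rfl)
          · exact h (hh ▸ h1 ▸ rfl)
      rw [Finset.sum_congr rfl (fun p (_ : p ∈ Finset.univ) =>
        Finset.sum_congr rfl (fun q (_ : q ∈ Finset.univ) => hterm p q))]
      simp only [Finset.sum_ite_eq, Finset.mem_univ, if_pos]
      have hMtr : M.trace = ∑ x, M x x := rfl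
      rw [hMtr, Finset.mul_sum, Finset.sum_mul]
    · rw [if_neg hij, if_neg hij, zero_add]
      have hterm : ∀ p q : Fin n, P i j * M p q *
          (if (i = j ∧ p = q) ∨ (i = p ∧ j = q) ∨ (i = q ∧ j = p) then (2:ℝ)^n else 0)
          = (if i = p ∧ j = q then P i j * M p q * 2^n else 0)
            + (if i = q ∧ j = p then P i j * M p q * 2^n else 0) := by
        intro p q
        by_cases h1 : i = p ∧ j = q
        · rw [if_pos h1, if_pos (Or.inr (Or.inl h1)), if_neg, add_zero]
          rintro ⟨ha, hb⟩
          exact hij (ha.trans h1.2.symm)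
        · by_cases h2 : i = q ∧ j = p
          · rw [if_pos (Or.inr (Or.inr h2)), if_neg h1, if_pos h2, zero_add]
          · rw [if_neg, if_neg h1, if_neg h2, mul_zero, add_zero]
            rintro (⟨h, -⟩ | h | h)
            · exact hij h
            · exact h1 h
            · exact h2 h
      simp only [hterm]
      simp only [Finset.sum_add_distrib]
      have e1 : ∑ p : Fin n, ∑ q : Fin n,
          (if i = p ∧ j = q then P i j * M p q * (2:ℝ)^n else 0)
          = P i j * M i j * 2^n := by
        rw [Finset.sum_eq_single i]
        · rw [Finset.sum_eq_single j]
          · rw [if_pos ⟨rfl, rfl⟩]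
          · intro q _ hq; rw [if_neg (fun h => hq h.2.symm)]
          · intro h; exact absurd (Finset.mem_univ j) h
        · intro p _ hp; apply Finset.sum_eq_zero; intro q _
          rw [if_neg (fun h => hp h.1.symm)]
        · intro h; exact absurd (Finset.mem_univ i) h
      have e2 : ∑ p : Fin n, ∑ q : Fin n,
          (if i = q ∧ j = p then P i j * M p q * (2:ℝ)^n else 0)
          = P i j * M j i * 2^n := by
        rw [Finset.sum_eq_single j]
        · rw [Finset.sum_eq_single i]
          · rw [if_pos ⟨rfl, rfl⟩]
          · intro q _ hq; rw [if_neg (fun h => hq h.1.symm)]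
          · intro h; exact absurd (Finset.mem_univ i) h
        · intro p _ hp; apply Finset.sum_eq_zero; intro q _
          rw [if_neg (fun h => hp h.2.symm)]
        · intro h; exact absurd (Finset.mem_univ j) h
      rw [e1, e2]; ring
  simp only [hcomb]
  simp only [Finset.sum_add_distrib]
  have d1 : ∑ x : Fin n, ∑ y : Fin n,
      (if x = y then P x x * M.trace * (2:ℝ)^n else 0)
      = P.trace * (2^n * M.trace) := by
    simp only [Finset.sum_ite_eq, Finset.mem_univ, if_pos]
    have hPtr : P.trace = ∑ x, P x x := rfl
    rw [hPtr, Finset.sum_mul]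
    exact Finset.sum_congr rfl fun x _ => by ring
  have d2 : ∑ x : Fin n, ∑ y : Fin n,
      ((2:ℝ)^n * if x = y then 0 else P x y * (M x y + M y x))
      = 2^n * ∑ i, ∑ j, (if i = j then 0 else P i j * (M i j + M j i)) := by
    rw [Finset.mul_sum]
    refine Finset.sum_congr rfl fun x _ => ?_
    rw [Finset.mul_sum]
  rw [d1, d2]
  ring

end Aux

section MatAux
variable {n k : ℕ} (ε : Fin n → ℝ) (Z : Matrix (Fin n) (Fin k) ℝ)

private lemma Vmat_symm : (Vmat ε Z)ᵀ = Vmat ε Z := by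
  unfold Vmat
  rw [Matrix.transpose_mul, Matrix.transpose_mul, Matrix.transpose_nonsing_inv]
  rw [Matrix.transpose_mul, Matrix.transpose_mul]
  simp [Matrix.diagonal_transpose, Matrix.mul_assoc]

private lemma Pmat_symm : (Pmat ε Z)ᵀ = Pmat ε Z := by
  unfold Pmat
  rw [Matrix.transpose_mul, Matrix.transpose_mul, Vmat_symm]
  simp [Matrix.diagonal_transpose, Matrix.mul_assoc]

private lemma Pmat_idem (hinv : IsUnit (Zᵀ * Matrix.diagonal (fun i => ε i ^ 2) * Z)) :
    Pmat ε Z * Pmat ε Z = Pmat ε Z := by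
  have hdet : IsUnit (Zᵀ * Matrix.diagonal (fun i => ε i ^ 2) * Z).det :=
    (Matrix.isUnit_iff_isUnit_det _).mp hinv
  have hD : Matrix.diagonal ε * Matrix.diagonal ε
      = Matrix.diagonal (fun i => ε i ^ 2) := by
    rw [Matrix.diagonal_mul_diagonal]
    congr 1; funext i; ring
  unfold Pmat Vmat
  set W := Zᵀ * Matrix.diagonal (fun i => ε i ^ 2) * Z with hW
  have key : (Z * W⁻¹ * Zᵀ) * (Matrix.diagonal ε * Matrix.diagonal ε) * (Z * W⁻¹ * Zᵀ)
      = Z * W⁻¹ * Zᵀ := by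
    rw [hD]
    calc (Z * W⁻¹ * Zᵀ) * Matrix.diagonal (fun i => ε i ^ 2) * (Z * W⁻¹ * Zᵀ)
        = Z * W⁻¹ * (Zᵀ * Matrix.diagonal (fun i => ε i ^ 2) * Z) * (W⁻¹ * Zᵀ) := by
          simp only [Matrix.mul_assoc]
      _ = Z * W⁻¹ * W * (W⁻¹ * Zᵀ) := by rw [← hW]
      _ = Z * (W⁻¹ * W) * (W⁻¹ * Zᵀ) := by simp only [Matrix.mul_assoc]
      _ = Z * W⁻¹ * Zᵀ := by rw [Matrix.nonsing_inv_mul _ hdet]; simp [Matrix.mul_assoc]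
  calc Matrix.diagonal ε * (Z * W⁻¹ * Zᵀ) * Matrix.diagonal ε *
        (Matrix.diagonal ε * (Z * W⁻¹ * Zᵀ) * Matrix.diagonal ε)
      = Matrix.diagonal ε * ((Z * W⁻¹ * Zᵀ) * (Matrix.diagonal ε * Matrix.diagonal ε) *
          (Z * W⁻¹ * Zᵀ)) * Matrix.diagonal ε := by simp only [Matrix.mul_assoc]
    _ = Matrix.diagonal ε * (Z * W⁻¹ * Zᵀ) * Matrix.diagonal ε := by
        rw [key]

end MatAux

/-- Covariance between the AR statistic and the CU score (entry `[Σ_n(β₀)]_{l+1,1}` of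
Theorem 2): `E[(rᵀPr − tr P)(n S_r)] = 2 Σᵢ Pᵢᵢ Ψᵢᵢ`, and with `k = tr P`,
`E[k^{-1/2}(rᵀPr − k) · √n S_r] = (2/√(nk)) Σᵢ Ψᵢᵢ Pᵢᵢ = (2/√(nk)) tr(Ψ ∘ P)`. -/
theorem stmt_9 {n k : ℕ} (hn : 0 < n) (hk : 0 < k)
    (ε : Fin n → ℝ) (Z : Matrix (Fin n) (Fin k) ℝ)
    (hinv : IsUnit (Zᵀ * Matrix.diagonal (fun i => ε i ^ 2) * Z))
    (xbar a : Fin n → ℝ)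
    (htr : (Pmat ε Z).trace = (k : ℝ)) :
    ((2 : ℝ) ^ n)⁻¹ *
        (∑ s : Fin n → Bool,
          (signVec s ⬝ᵥ (Pmat ε Z).mulVec (signVec s) - (Pmat ε Z).trace) *
            ((n : ℝ) * scoreR ε Z xbar a s))
      = 2 * ∑ i, Pmat ε Z i i * PsiMat ε Z a i i ∧
    ((2 : ℝ) ^ n)⁻¹ *
        (∑ s : Fin n → Bool,
          ((Real.sqrt (k : ℝ))⁻¹ *
              (signVec s ⬝ᵥ (Pmat ε Z).mulVec (signVec s) - (k : ℝ))) *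
            (Real.sqrt (n : ℝ) * scoreR ε Z xbar a s))
      = 2 / Real.sqrt ((n : ℝ) * (k : ℝ)) * ∑ i, PsiMat ε Z a i i * Pmat ε Z i i := by
  have hn0 : (n : ℝ) ≠ 0 := Nat.cast_ne_zero.mpr hn.ne'
  have hsym : (Pmat ε Z)ᵀ = Pmat ε Z := Pmat_symm ε Z
  have hidem : Pmat ε Z * Pmat ε Z = Pmat ε Z := Pmat_idem ε Z hinv
  set P := Pmat ε Z
  set Ψ := PsiMat ε Z a with hΨdef
  set M : Matrix (Fin n) (Fin n) ℝ :=
    P * Matrix.diagonal a * P - Matrix.diagonal a * P with hMdef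
  have hMΨ : M = -Ψ := by
    rw [hMdef, hΨdef]
    show P * Matrix.diagonal a * P - Matrix.diagonal a * P
        = -((1 - P) * Matrix.diagonal a * P)
    noncomm_ring
  -- P * Ψ = 0
  have hPΨ : P * Ψ = 0 := by
    have h0 : P * (1 - P) = 0 := by rw [Matrix.mul_sub, Matrix.mul_one, hidem, sub_self]
    rw [hΨdef]
    show P * ((1 - P) * Matrix.diagonal a * P) = 0
    rw [← Matrix.mul_assoc, ← Matrix.mul_assoc, h0, Matrix.zero_mul, Matrix.zero_mul]
  have hsym' : ∀ i j, P i j = P j i := by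
    intro i j
    calc P i j = Pᵀ j i := (Matrix.transpose_apply P j i).symm
      _ = P j i := by rw [hsym]
  have hz1 : ∑ i : Fin n, ∑ j : Fin n, P i j * Ψ j i = 0 := by
    have : ∀ i : Fin n, ∑ j : Fin n, P i j * Ψ j i = (P * Ψ) i i :=
      fun i => (Matrix.mul_apply).symm
    simp only [this, hPΨ, Matrix.zero_apply, Finset.sum_const_zero]
  have hz2 : ∑ i : Fin n, ∑ j : Fin n, P i j * Ψ i j = 0 := by
    have h1 : ∑ i : Fin n, ∑ j : Fin n, P i j * Ψ i j
        = ∑ j : Fin n, ∑ i : Fin n, P j i * Ψ i j := by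
      rw [Finset.sum_comm]
      refine Finset.sum_congr rfl fun j _ => Finset.sum_congr rfl fun i _ => ?_
      rw [hsym' i j]
    rw [h1]
    have : ∀ j : Fin n, ∑ i : Fin n, P j i * Ψ i j = (P * Ψ) j j :=
      fun j => (Matrix.mul_apply).symm
    simp only [this, hPΨ, Matrix.zero_apply, Finset.sum_const_zero]
  -- inner combinatorial sum
  have hinner : ∑ i : Fin n, ∑ j : Fin n, (if i = j then 0 else P i j * (M i j + M j i))
      = 2 * ∑ i, P i i * Ψ i i := by
    have hptw : ∀ i j : Fin n, (if i = j then 0 else P i j * (M i j + M j i))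
        = (-(P i j * Ψ i j) - P i j * Ψ j i)
          - (if i = j then (-(P i j * Ψ i j) - P i j * Ψ j i) else 0) := by
      intro i j
      have hm : ∀ x y : Fin n, M x y = -(Ψ x y) := by
        intro x y; rw [hMΨ, Matrix.neg_apply]
      by_cases h : i = j
      · rw [if_pos h, if_pos h]; ring
      · rw [if_neg h, if_neg h, sub_zero, hm, hm]; ring
    simp only [hptw]
    simp only [Finset.sum_sub_distrib, Finset.sum_neg_distrib, Finset.sum_ite_eq,
      Finset.mem_univ, if_pos, hz1, hz2]
    ring
  -- the core expectation computation
  have hS : ∑ s : Fin n → Bool,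
      (signVec s ⬝ᵥ P.mulVec (signVec s) - P.trace) * ((n : ℝ) * scoreR ε Z xbar a s)
      = 2^n * (2 * ∑ i, P i i * Ψ i i) := by
    have hdecomp : ∀ s : Fin n → Bool, (n : ℝ) * scoreR ε Z xbar a s
        = signVec s ⬝ᵥ M.mulVec (signVec s)
          + (-(xbar ⬝ᵥ (Vmat ε Z * Matrix.diagonal ε).mulVec (signVec s))
            + signVec s ⬝ᵥ (P * Matrix.diagonal (signVec s) * Matrix.diagonal xbar *
                Vmat ε Z * Matrix.diagonal ε).mulVec (signVec s)) := by
      intro s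
      have hq : signVec s ⬝ᵥ M.mulVec (signVec s)
          = signVec s ⬝ᵥ (P * Matrix.diagonal a * P).mulVec (signVec s)
            - signVec s ⬝ᵥ (Matrix.diagonal a * P).mulVec (signVec s) := by
        rw [hMdef, Matrix.sub_mulVec, dotProduct_sub]
      rw [hq]
      unfold scoreR
      field_simp
      ring
    have hsum : ∑ s : Fin n → Bool,
        (signVec s ⬝ᵥ P.mulVec (signVec s) - P.trace) * ((n : ℝ) * scoreR ε Z xbar a s)
        = (∑ s : Fin n → Bool,
            (signVec s ⬝ᵥ P.mulVec (signVec s) - P.trace) *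
              (signVec s ⬝ᵥ M.mulVec (signVec s)))
          + ((∑ s : Fin n → Bool,
              (signVec s ⬝ᵥ P.mulVec (signVec s) - P.trace) *
                (-(xbar ⬝ᵥ (Vmat ε Z * Matrix.diagonal ε).mulVec (signVec s))))
            + (∑ s : Fin n → Bool,
              (signVec s ⬝ᵥ P.mulVec (signVec s) - P.trace) *
                (signVec s ⬝ᵥ (P * Matrix.diagonal (signVec s) * Matrix.diagonal xbar *
                    Vmat ε Z * Matrix.diagonal ε).mulVec (signVec s)))) := by
      rw [← Finset.sum_add_distrib, ← Finset.sum_add_distrib]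
      exact Finset.sum_congr rfl fun s _ => by rw [hdecomp s]; ring
    have ho1 : ∑ s : Fin n → Bool,
        (signVec s ⬝ᵥ P.mulVec (signVec s) - P.trace) *
          (-(xbar ⬝ᵥ (Vmat ε Z * Matrix.diagonal ε).mulVec (signVec s))) = 0 := by
      apply sum_flipAll_zero
      intro s
      simp only [signVec_not, Matrix.mulVec_neg, dotProduct_neg, neg_dotProduct, neg_neg]
      ring
    have ho4 : ∑ s : Fin n → Bool,
        (signVec s ⬝ᵥ P.mulVec (signVec s) - P.trace) *
          (signVec s ⬝ᵥ (P * Matrix.diagonal (signVec s) * Matrix.diagonal xbar *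
              Vmat ε Z * Matrix.diagonal ε).mulVec (signVec s)) = 0 := by
      apply sum_flipAll_zero
      intro s
      simp only [signVec_not, diagonal_neg', Matrix.mul_neg, Matrix.neg_mul,
        Matrix.neg_mulVec, Matrix.mulVec_neg, dotProduct_neg, neg_dotProduct, neg_neg]
      ring
    rw [hsum, ho1, ho4, quart P M, hinner]
    ring
  constructor
  · rw [hS, inv_mul_cancel_left₀ (pow_ne_zero n two_ne_zero)]
  · have hkpos : (0 : ℝ) < (k : ℝ) := by exact_mod_cast hk
    have hnpos : (0 : ℝ) < (n : ℝ) := by exact_mod_cast hn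
    have hsqk : Real.sqrt (k : ℝ) ≠ 0 := ne_of_gt (Real.sqrt_pos.mpr hkpos)
    have hsqn : Real.sqrt (n : ℝ) ≠ 0 := ne_of_gt (Real.sqrt_pos.mpr hnpos)
    have hnk : Real.sqrt ((n : ℝ) * (k : ℝ)) = Real.sqrt (n : ℝ) * Real.sqrt (k : ℝ) :=
      Real.sqrt_mul (le_of_lt hnpos) _
    have hss : Real.sqrt (n : ℝ) * Real.sqrt (n : ℝ) = (n : ℝ) :=
      Real.mul_self_sqrt (le_of_lt hnpos)
    have hrw2 : ∀ s : Fin n → Bool,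
        ((Real.sqrt (k : ℝ))⁻¹ * (signVec s ⬝ᵥ P.mulVec (signVec s) - (k : ℝ))) *
          (Real.sqrt (n : ℝ) * scoreR ε Z xbar a s)
        = ((Real.sqrt (k : ℝ))⁻¹ * Real.sqrt (n : ℝ) * ((n : ℝ))⁻¹) *
            ((signVec s ⬝ᵥ P.mulVec (signVec s) - P.trace) *
              ((n : ℝ) * scoreR ε Z xbar a s)) := by
      intro s
      rw [htr]
      field_simp
    rw [Finset.sum_congr rfl (fun s _ => hrw2 s), ← Finset.mul_sum, hS]
    have hXY : ∑ i, Ψ i i * P i i = ∑ i, P i i * Ψ i i :=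
      Finset.sum_congr rfl fun i _ => mul_comm _ _
    rw [hXY, hnk]
    rw [show ((n : ℝ))⁻¹ = (Real.sqrt (n : ℝ) * Real.sqrt (n : ℝ))⁻¹ from by rw [hss]]
    field_simp
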